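/- Let f : [a,b] → ℝ be continuous, let F(x) := ∫_a^x f, assume F satisfies condition (noflat), and let J^φ_F be the function associated to F and a smooth compactly supported φ. Then for every smooth function φ compactly supported in (a,b), ∫_a^b Tf(x)·(J^φ_F)'(x) dx = ∫_a^b Tf(x)·φ'(x) dx, where Tf := (F**)'. -/

import Mathlib

open Set MeasureTheory Filter Topology

/-- The convex envelope (convexification) of `f` on `[a,b]`. -/
noncomputable def convEnv (a b : ℝ) (f : ℝ → ℝ) : ℝ → ℝ := fun x =>
  sInf {y : ℝ | ∃ lam x₀ x₁ : ℝ, lam ∈ Set.Icc (0:ℝ) 1 ∧ x₀ ∈ Set.Icc a b ∧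
    x₁ ∈ Set.Icc a b ∧ (1 - lam) * x₀ + lam * x₁ = x ∧
    y = (1 - lam) * f x₀ + lam * f x₁}

/-- The primitive `F(x) = ∫_a^x f(y) dy`. -/
noncomputable def primit (a : ℝ) (f : ℝ → ℝ) : ℝ → ℝ := fun x => ∫ y in a..x, f y

/-- The operator `T`: `Tf = (F**)'`. -/
noncomputable def Tcv (a b : ℝ) (f : ℝ → ℝ) : ℝ → ℝ :=
  derivWithin (convEnv a b (primit a f)) (Set.Icc a b)

/-- Condition (noflat) for a function `F` on `[a,b]`. -/
def NoFlat (a b : ℝ) (F : ℝ → ℝ) : Prop :=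
  ∀ c d : ℝ, a ≤ c → c < d → d ≤ b →
    (∃ m q : ℝ, ∀ x ∈ Set.Ioo c d, convEnv a b F x = m * x + q) →
    ∀ x ∈ Set.Ioo c d, convEnv a b F x < F x

/-- `J` is the function `J^φ_F` associated to `F` and `φ`. -/
def IsJ (a b : ℝ) (F φ J : ℝ → ℝ) : Prop :=
  (∀ x ∈ Set.Icc a b, F x = convEnv a b F x → J x = φ x) ∧
  ∀ c d : ℝ, a ≤ c → c < d → d ≤ b →
    (∀ x ∈ Set.Ioo c d, convEnv a b F x < F x) →
    (c = a ∨ F c = convEnv a b F c) → (d = b ∨ F d = convEnv a b F d) →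
    ∀ x ∈ Set.Ioo c d, J x = φ c + ((φ d - φ c) / (d - c)) * (x - c)

/-- the combination set -/
def comboSet (a b : ℝ) (f : ℝ → ℝ) (x : ℝ) : Set ℝ :=
  {y : ℝ | ∃ lam x₀ x₁ : ℝ, lam ∈ Set.Icc (0:ℝ) 1 ∧ x₀ ∈ Set.Icc a b ∧
    x₁ ∈ Set.Icc a b ∧ (1 - lam) * x₀ + lam * x₁ = x ∧
    y = (1 - lam) * f x₀ + lam * f x₁}

lemma convEnv_def (a b : ℝ) (f : ℝ → ℝ) (x : ℝ) :
    convEnv a b f x = sInf (comboSet a b f x) := rfl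

variable {a b : ℝ} {F : ℝ → ℝ}

lemma self_mem_comboSet {x : ℝ} (hx : x ∈ Icc a b) : F x ∈ comboSet a b F x :=
  ⟨0, x, x, by norm_num, hx, hx, by ring, by ring⟩

lemma comboSet_nonempty {x : ℝ} (hx : x ∈ Icc a b) : (comboSet a b F x).Nonempty :=
  ⟨F x, self_mem_comboSet hx⟩

lemma bddBelow_comboSet (hab : a ≤ b) (hF : ContinuousOn F (Icc a b)) (x : ℝ) :
    BddBelow (comboSet a b F x) := by
  obtain ⟨m, -, hm⟩ := isCompact_Icc.exists_isMinOn (α := ℝ) (nonempty_Icc.2 hab) hF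
  refine ⟨F m, ?_⟩
  rintro y ⟨lam, x₀, x₁, hlam, h₀, h₁, -, rfl⟩
  have h0 : F m ≤ F x₀ := hm h₀
  have h1 : F m ≤ F x₁ := hm h₁
  nlinarith [hlam.1, hlam.2]

lemma convEnv_le_combo (hab : a ≤ b) (hF : ContinuousOn F (Icc a b)) {x₀ x₁ t : ℝ}
    (h₀ : x₀ ∈ Icc a b) (h₁ : x₁ ∈ Icc a b) (ht : t ∈ Icc (0:ℝ) 1) :
    convEnv a b F ((1 - t) * x₀ + t * x₁) ≤ (1 - t) * F x₀ + t * F x₁ :=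
  csInf_le (bddBelow_comboSet hab hF _) ⟨t, x₀, x₁, ht, h₀, h₁, rfl, rfl⟩

lemma convEnv_le_self (hab : a ≤ b) (hF : ContinuousOn F (Icc a b)) {x : ℝ}
    (hx : x ∈ Icc a b) : convEnv a b F x ≤ F x :=
  csInf_le (bddBelow_comboSet hab hF x) (self_mem_comboSet hx)

/-- attainment of the infimum -/
lemma convEnv_attained (hab : a ≤ b) (hF : ContinuousOn F (Icc a b)) {x : ℝ}
    (hx : x ∈ Icc a b) :
    ∃ lam x₀ x₁ : ℝ, lam ∈ Set.Icc (0:ℝ) 1 ∧ x₀ ∈ Set.Icc a b ∧ x₁ ∈ Set.Icc a b ∧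
      (1 - lam) * x₀ + lam * x₁ = x ∧
      convEnv a b F x = (1 - lam) * F x₀ + lam * F x₁ := by
  classical
  set T : Set (ℝ × ℝ × ℝ) := {p | p.1 ∈ Icc (0:ℝ) 1 ∧ p.2.1 ∈ Icc a b ∧ p.2.2 ∈ Icc a b ∧
    (1 - p.1) * p.2.1 + p.1 * p.2.2 = x} with hT
  have hTsub : T ⊆ (Icc (0:ℝ) 1) ×ˢ ((Icc a b) ×ˢ (Icc a b)) := by
    rintro ⟨l, y, z⟩ ⟨h1, h2, h3, -⟩
    exact ⟨h1, h2, h3⟩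
  have hTclosed : IsClosed T := by
    have : T = ((Icc (0:ℝ) 1) ×ˢ ((Icc a b) ×ˢ (Icc a b))) ∩
        {p : ℝ × ℝ × ℝ | (1 - p.1) * p.2.1 + p.1 * p.2.2 = x} := by
      ext ⟨l, y, z⟩
      simp only [hT, mem_setOf_eq, mem_inter_iff, mem_prod]
      tauto
    rw [this]
    exact ((isClosed_Icc.prod (isClosed_Icc.prod isClosed_Icc))).inter
      (isClosed_eq (by fun_prop) continuous_const)
  have hTcomp : IsCompact T :=
    (isCompact_Icc.prod (isCompact_Icc.prod isCompact_Icc)).of_isClosed_subset hTclosed hTsub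
  have hTne : T.Nonempty := ⟨(0, x, x), ⟨by norm_num, hx, hx, by ring⟩⟩
  have hcont : ContinuousOn (fun p : ℝ × ℝ × ℝ => (1 - p.1) * F p.2.1 + p.1 * F p.2.2) T := by
    apply ContinuousOn.add
    · apply ContinuousOn.mul (by fun_prop)
      exact hF.comp (continuous_fst.comp continuous_snd).continuousOn
        (fun p hp => (hTsub hp).2.1)
    · apply ContinuousOn.mul (by fun_prop)
      exact hF.comp (continuous_snd.comp continuous_snd).continuousOn
        (fun p hp => (hTsub hp).2.2)
  obtain ⟨p₀, hp₀T, hp₀⟩ := hTcomp.exists_isMinOn hTne hcont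
  obtain ⟨hl, h0, h1, hcomb⟩ := hp₀T
  refine ⟨p₀.1, p₀.2.1, p₀.2.2, hl, h0, h1, hcomb, le_antisymm ?_ ?_⟩
  · exact csInf_le (bddBelow_comboSet hab hF x) ⟨p₀.1, p₀.2.1, p₀.2.2, hl, h0, h1, hcomb, rfl⟩
  · apply le_csInf (comboSet_nonempty hx)
    rintro y ⟨lam, x₀, x₁, hlam, hx₀, hx₁, hc, rfl⟩
    exact hp₀ (show (lam, x₀, x₁) ∈ T from ⟨hlam, hx₀, hx₁, hc⟩)

lemma convEnv_eq_left (hab : a ≤ b) : convEnv a b F a = F a := by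
  have : comboSet a b F a = {F a} := by
    ext y
    constructor
    · rintro ⟨lam, x₀, x₁, ⟨hl0, hl1⟩, h₀, h₁, hc, rfl⟩
      have hx₀ : (1 - lam) * x₀ ≥ (1 - lam) * a := by nlinarith [h₀.1]
      have hx₁ : lam * x₁ ≥ lam * a := by nlinarith [h₁.1]
      have h0 : (1 - lam) * (x₀ - a) = 0 ∧ lam * (x₁ - a) = 0 := by
        constructor <;> nlinarith
      have : (1 - lam) * F x₀ + lam * F x₁ = F a := by
        rcases eq_or_lt_of_le hl0 with h | h
        · have : lam = 0 := h.symm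
          subst this
          have : x₀ = a := by linarith [h0.1]
          simp [this]
        rcases eq_or_lt_of_le hl1 with h' | h'
        · subst h'
          have : x₁ = a := by
            have := h0.2; nlinarith
          simp [this]
        · have e0 : x₀ = a := by
            have h2 : (1:ℝ) - lam > 0 := by linarith
            have := h0.1
            have : x₀ - a = 0 := by
              by_contra hne
              exact hne (by nlinarith)
            linarith
          have e1 : x₁ = a := by
            have := h0.2
            have : x₁ - a = 0 := by
              by_contra hne
              exact hne (by nlinarith)
            linarith
          subst e0; subst e1; ring
      simp [this]
    · rintro rfl
      exact self_mem_comboSet (left_mem_Icc.2 hab)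
  rw [convEnv_def, this, csInf_singleton]

lemma convEnv_eq_right (hab : a ≤ b) : convEnv a b F b = F b := by
  have : comboSet a b F b = {F b} := by
    ext y
    constructor
    · rintro ⟨lam, x₀, x₁, ⟨hl0, hl1⟩, h₀, h₁, hc, rfl⟩
      have h0 : (1 - lam) * (b - x₀) = 0 ∧ lam * (b - x₁) = 0 := by
        constructor <;> nlinarith [h₀.2, h₁.2, h₀.1, h₁.1]
      have : (1 - lam) * F x₀ + lam * F x₁ = F b := by
        rcases eq_or_lt_of_le hl0 with h | h
        · have : lam = 0 := h.symm
          subst this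
          have : x₀ = b := by linarith [h0.1]
          simp [this]
        rcases eq_or_lt_of_le hl1 with h' | h'
        · subst h'
          have : x₁ = b := by have := h0.2; nlinarith
          simp [this]
        · have e0 : x₀ = b := by
            have := h0.1
            have : b - x₀ = 0 := by
              by_contra hne
              exact hne (by nlinarith)
            linarith
          have e1 : x₁ = b := by
            have := h0.2
            have : b - x₁ = 0 := by
              by_contra hne
              exact hne (by nlinarith)
            linarith
          subst e0; subst e1; ring
      simp [this]
    · rintro rfl
      exact self_mem_comboSet (right_mem_Icc.2 hab)
  rw [convEnv_def, this, csInf_singleton]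


lemma tri_sorted {p q r yp yq yr z V α β γ : ℝ}
    (hpq : p ≤ q) (hqr : q ≤ r)
    (hα : 0 ≤ α) (hβ : 0 ≤ β) (hγ : 0 ≤ γ) (hsum : α + β + γ = 1)
    (hz : α * p + β * q + γ * r = z) (hV : α * yp + β * yq + γ * yr = V) :
    (∃ t ∈ Icc (0:ℝ) 1, (1 - t) * p + t * q = z ∧ (1 - t) * yp + t * yq ≤ V) ∨
    (∃ t ∈ Icc (0:ℝ) 1, (1 - t) * p + t * r = z ∧ (1 - t) * yp + t * yr ≤ V) ∨
    (∃ t ∈ Icc (0:ℝ) 1, (1 - t) * q + t * r = z ∧ (1 - t) * yq + t * yr ≤ V) := by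
  have hα' : α = 1 - β - γ := by linarith
  subst hα'
  have e1 : z - p = β * (q - p) + γ * (r - p) := by linear_combination -hz
  have e2 : r - z = (1 - β - γ) * (r - p) + β * (r - q) := by linear_combination hz
  have eV1 : V - yp = β * (yq - yp) + γ * (yr - yp) := by linear_combination -hV
  have eV2 : V - yq = (1 - β - γ) * (yp - yq) + γ * (yr - yq) := by linear_combination -hV
  have hpz : p ≤ z := by
    nlinarith [mul_nonneg hβ (sub_nonneg.2 hpq), mul_nonneg hγ (sub_nonneg.2 (hpq.trans hqr))]
  have hzr : z ≤ r := by
    nlinarith [mul_nonneg hα (sub_nonneg.2 (hpq.trans hqr)), mul_nonneg hβ (sub_nonneg.2 hqr)]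
  rcases le_or_gt r p with hrp | hpr
  · -- degenerate: p = q = r = z
    have hqp : q = p := le_antisymm (by linarith) hpq
    have hrp' : r = p := le_antisymm hrp (by linarith)
    have hzp : z = p := by rw [hqp, hrp'] at e1; linarith [e1]
    subst hqp; subst hrp'
    rcases le_total yp yq with h1 | h1
    · rcases le_total yp yr with h2 | h2
      · refine Or.inl ⟨0, by norm_num, by rw [hzp]; ring, ?_⟩
        nlinarith [mul_nonneg hβ (sub_nonneg.2 h1), mul_nonneg hγ (sub_nonneg.2 h2)]
      · refine Or.inr (Or.inl ⟨1, by norm_num, by rw [hzp]; ring, ?_⟩)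
        nlinarith [mul_nonneg hβ (sub_nonneg.2 (h2.trans h1)), mul_nonneg hα (sub_nonneg.2 h2)]
    · rcases le_total yq yr with h2 | h2
      · refine Or.inl ⟨1, by norm_num, by rw [hzp]; ring, ?_⟩
        nlinarith [mul_nonneg hα (sub_nonneg.2 h1), mul_nonneg hγ (sub_nonneg.2 h2)]
      · refine Or.inr (Or.inr ⟨1, by norm_num, by rw [hzp]; ring, ?_⟩)
        nlinarith [mul_nonneg hα (sub_nonneg.2 (h2.trans h1)), mul_nonneg hβ (sub_nonneg.2 h2)]
  · have hrp0 : r - p ≠ 0 := sub_ne_zero.2 (ne_of_gt hpr)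
    rcases le_or_gt ((yr - yp) * (q - p)) ((yq - yp) * (r - p)) with hB | hB
    · -- q on or above chord p-r : use segment (p, r)
      right; left
      set t := (z - p) / (r - p) with htdef
      have ht1 : t * (r - p) = z - p := by rw [htdef]; exact div_mul_cancel₀ _ hrp0
      refine ⟨t, ⟨div_nonneg (by linarith) (by linarith),
        by rw [htdef, div_le_one (by linarith)]; linarith⟩, ?_, ?_⟩
      · have : ((1 - t) * p + t * r) - z = t * (r - p) - (z - p) := by ring
        rw [ht1] at this; linarith
      · have key : 0 ≤ β * ((yq - yp) * (r - p) - (yr - yp) * (q - p)) :=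
          mul_nonneg hβ (by linarith)
        have hval : ((1 - t) * yp + t * yr) * (r - p)
            = yp * (r - p) + (z - p) * (yr - yp) := by
          have h0 : ((1 - t) * yp + t * yr) * (r - p)
              = yp * (r - p) + (t * (r - p)) * (yr - yp) := by ring
          rw [h0, ht1]
        have hVrp : V * (r - p) - (yp * (r - p) + (z - p) * (yr - yp))
            = β * ((yq - yp) * (r - p) - (yr - yp) * (q - p)) := by
          linear_combination (r - p) * eV1 - (yr - yp) * e1
        have hfin : ((1 - t) * yp + t * yr) * (r - p) ≤ V * (r - p) := by
          rw [hval]; linarith [key, hVrp]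
        exact le_of_mul_le_mul_right hfin (sub_pos.2 hpr)
    · rcases le_or_gt z q with hzq | hzq
      · -- use segment (p, q)
        left
        rcases eq_or_lt_of_le hpq with hqp | hpq'
        · -- p = q, z = p, γ = 0
          have hzp : z = p := le_antisymm (hqp ▸ hzq) hpz
          have hγ0 : γ * (r - p) = 0 := by rw [← hqp] at e1; rw [hzp] at e1; linarith
          have hγ0' : γ = 0 := by
            rcases mul_eq_zero.1 hγ0 with h | h
            · exact h
            · exact absurd h hrp0
          have hyq : yq < yp := by
            rw [← hqp] at hB
            nlinarith
          refine ⟨1, by norm_num, by rw [← hqp, hzp]; ring, ?_⟩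
          have h1b : 0 ≤ (1 - β - γ) * (yp - yq) :=
            mul_nonneg hα (by linarith)
          rw [hγ0'] at eV2
          nlinarith [h1b, hγ0']
        · have hqp0 : q - p ≠ 0 := sub_ne_zero.2 (ne_of_gt hpq')
          set t := (z - p) / (q - p) with htdef
          have ht1 : t * (q - p) = z - p := by rw [htdef]; exact div_mul_cancel₀ _ hqp0
          refine ⟨t, ⟨div_nonneg (by linarith) (by linarith),
            by rw [htdef, div_le_one (by linarith)]; linarith⟩, ?_, ?_⟩
          · have : ((1 - t) * p + t * q) - z = t * (q - p) - (z - p) := by ring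
            rw [ht1] at this; linarith
          · have key : 0 ≤ γ * ((yr - yp) * (q - p) - (yq - yp) * (r - p)) :=
              mul_nonneg hγ (by linarith)
            have hval : ((1 - t) * yp + t * yq) * (q - p)
                = yp * (q - p) + (z - p) * (yq - yp) := by
              have h0 : ((1 - t) * yp + t * yq) * (q - p)
                  = yp * (q - p) + (t * (q - p)) * (yq - yp) := by ring
              rw [h0, ht1]
            have hVrp : V * (q - p) - (yp * (q - p) + (z - p) * (yq - yp))
                = γ * ((yr - yp) * (q - p) - (yq - yp) * (r - p)) := by
              linear_combination (q - p) * eV1 - (yq - yp) * e1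
            have hfin : ((1 - t) * yp + t * yq) * (q - p) ≤ V * (q - p) := by
              rw [hval]; linarith [key, hVrp]
            exact le_of_mul_le_mul_right hfin (sub_pos.2 hpq')
      · -- z > q: use segment (q, r); note q < r
        right; right
        have hqr' : q < r := lt_of_lt_of_le hzq hzr
        have hrq0 : r - q ≠ 0 := sub_ne_zero.2 (ne_of_gt hqr')
        set t := (z - q) / (r - q) with htdef
        have ht1 : t * (r - q) = z - q := by rw [htdef]; exact div_mul_cancel₀ _ hrq0
        refine ⟨t, ⟨div_nonneg (by linarith) (by linarith),
          by rw [htdef, div_le_one (by linarith)]; linarith⟩, ?_, ?_⟩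
        · have : ((1 - t) * q + t * r) - z = t * (r - q) - (z - q) := by ring
          rw [ht1] at this; linarith
        · have key : 0 ≤ (1 - β - γ) * ((yr - yp) * (q - p) - (yq - yp) * (r - p)) :=
            mul_nonneg hα (by linarith)
          have hval : ((1 - t) * yq + t * yr) * (r - q)
              = yq * (r - q) + (z - q) * (yr - yq) := by
            have h0 : ((1 - t) * yq + t * yr) * (r - q)
                = yq * (r - q) + (t * (r - q)) * (yr - yq) := by ring
            rw [h0, ht1]
          have e1' : z - q = (1 - β - γ) * (p - q) + γ * (r - q) := by
            linear_combination -hz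
          have hVrp : V * (r - q) - (yq * (r - q) + (z - q) * (yr - yq))
              = (1 - β - γ) * ((yp - yq) * (r - q) - (yr - yq) * (p - q)) := by
            linear_combination (r - q) * eV2 - (yr - yq) * e1'
          have keyeq : (yp - yq) * (r - q) - (yr - yq) * (p - q)
              = (yr - yp) * (q - p) - (yq - yp) * (r - p) := by ring
          have key2 : 0 ≤ (1 - β - γ) * ((yp - yq) * (r - q) - (yr - yq) * (p - q)) := by
            rw [keyeq]; exact key
          have hfin : ((1 - t) * yq + t * yr) * (r - q) ≤ V * (r - q) := by
            rw [hval]; linarith [key2, hVrp]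
          exact le_of_mul_le_mul_right hfin (sub_pos.2 hqr')


lemma seg_swap {u v yu yv z V : ℝ}
    (h : ∃ t ∈ Icc (0:ℝ) 1, (1 - t) * u + t * v = z ∧ (1 - t) * yu + t * yv ≤ V) :
    ∃ t ∈ Icc (0:ℝ) 1, (1 - t) * v + t * u = z ∧ (1 - t) * yv + t * yu ≤ V := by
  obtain ⟨t, ht, h1, h2⟩ := h
  refine ⟨1 - t, ⟨by linarith [ht.2], by linarith [ht.1]⟩, by linear_combination h1, ?_⟩
  have he : (1 - (1 - t)) * yv + (1 - t) * yu = (1 - t) * yu + t * yv := by ring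
  rw [he]; exact h2

lemma tri {p q r yp yq yr z V α β γ : ℝ}
    (hα : 0 ≤ α) (hβ : 0 ≤ β) (hγ : 0 ≤ γ) (hsum : α + β + γ = 1)
    (hz : α * p + β * q + γ * r = z) (hV : α * yp + β * yq + γ * yr = V) :
    (∃ t ∈ Icc (0:ℝ) 1, (1 - t) * p + t * q = z ∧ (1 - t) * yp + t * yq ≤ V) ∨
    (∃ t ∈ Icc (0:ℝ) 1, (1 - t) * p + t * r = z ∧ (1 - t) * yp + t * yr ≤ V) ∨
    (∃ t ∈ Icc (0:ℝ) 1, (1 - t) * q + t * r = z ∧ (1 - t) * yq + t * yr ≤ V) := by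
  rcases le_total p q with h1 | h1
  · rcases le_total q r with h2 | h2
    · exact tri_sorted h1 h2 hα hβ hγ hsum hz hV
    · rcases le_total p r with h3 | h3
      · -- p ≤ r ≤ q
        rcases tri_sorted h3 h2 hα hγ hβ (by linarith)
          (show α * p + γ * r + β * q = z by linarith)
          (show α * yp + γ * yr + β * yq = V by linarith)
          with h | h | h
        · exact Or.inr (Or.inl h)
        · exact Or.inl h
        · exact Or.inr (Or.inr (seg_swap h))
      · -- r ≤ p ≤ q
        rcases tri_sorted h3 h1 hγ hα hβ (by linarith)
          (show γ * r + α * p + β * q = z by linarith)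
          (show γ * yr + α * yp + β * yq = V by linarith)
          with h | h | h
        · exact Or.inr (Or.inl (seg_swap h))
        · exact Or.inr (Or.inr (seg_swap h))
        · exact Or.inl h
  · rcases le_total q r with h2 | h2
    · rcases le_total p r with h3 | h3
      · -- q ≤ p ≤ r
        rcases tri_sorted h1 h3 hβ hα hγ (by linarith)
          (show β * q + α * p + γ * r = z by linarith)
          (show β * yq + α * yp + γ * yr = V by linarith)
          with h | h | h
        · exact Or.inl (seg_swap h)
        · exact Or.inr (Or.inr h)
        · exact Or.inr (Or.inl h)
      · -- q ≤ r ≤ p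
        rcases tri_sorted h2 h3 hβ hγ hα (by linarith)
          (show β * q + γ * r + α * p = z by linarith)
          (show β * yq + γ * yr + α * yp = V by linarith)
          with h | h | h
        · exact Or.inr (Or.inr h)
        · exact Or.inl (seg_swap h)
        · exact Or.inr (Or.inl (seg_swap h))
    · -- r ≤ q ≤ p
      rcases tri_sorted h2 h1 hγ hβ hα (by linarith)
          (show γ * r + β * q + α * p = z by linarith)
          (show γ * yr + β * yq + α * yp = V by linarith)
        with h | h | h
      · exact Or.inr (Or.inr (seg_swap h))
      · exact Or.inr (Or.inl (seg_swap h))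
      · exact Or.inl (seg_swap h)

variable {a b : ℝ} {F : ℝ → ℝ}

lemma convEnv_le_of_segment (hab : a ≤ b) (hF : ContinuousOn F (Icc a b))
    {u v z V : ℝ} (hu : u ∈ Icc a b) (hv : v ∈ Icc a b)
    (h : ∃ t ∈ Icc (0:ℝ) 1, (1 - t) * u + t * v = z ∧ (1 - t) * F u + t * F v ≤ V) :
    convEnv a b F z ≤ V := by
  obtain ⟨t, ht, hc, hval⟩ := h
  calc convEnv a b F z = convEnv a b F ((1 - t) * u + t * v) := by rw [hc]
  _ ≤ (1 - t) * F u + t * F v := convEnv_le_combo hab hF hu hv ht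
  _ ≤ V := hval

lemma convEnv_step2 (hab : a ≤ b) (hF : ContinuousOn F (Icc a b))
    {G y z V : ℝ} (hG : G ∈ Icc a b) (hy : y ∈ Icc a b)
    (h : ∃ t ∈ Icc (0:ℝ) 1, (1 - t) * G + t * y = z ∧
      (1 - t) * F G + t * (convEnv a b F y) ≤ V) :
    convEnv a b F z ≤ V := by
  obtain ⟨t, ht, hc, hval⟩ := h
  obtain ⟨m, q0, q1, hm, hq0, hq1, hcy, hgy⟩ := convEnv_attained hab hF hy
  have step := tri (p := q0) (q := q1) (r := G) (yp := F q0) (yq := F q1) (yr := F G)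
    (α := t * (1 - m)) (β := t * m) (γ := 1 - t) (z := z)
    (V := (1 - t) * F G + t * (convEnv a b F y))
    (mul_nonneg ht.1 (by linarith [hm.2])) (mul_nonneg ht.1 hm.1) (by linarith [ht.2])
    (by ring) (by linear_combination t * hcy + hc) (by linear_combination (-t) * hgy)
  rcases step with h' | h' | h'
  · exact (convEnv_le_of_segment hab hF hq0 hq1 h').trans hval
  · exact (convEnv_le_of_segment hab hF hq0 hG h').trans hval
  · exact (convEnv_le_of_segment hab hF hq1 hG h').trans hval

lemma convexOn_convEnv (hab : a ≤ b) (hF : ContinuousOn F (Icc a b)) :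
    ConvexOn ℝ (Icc a b) (convEnv a b F) := by
  refine ⟨convex_Icc a b, fun x hx y hy s t hs ht hst => ?_⟩
  simp only [smul_eq_mul]
  obtain ⟨l, p0, p1, hl, hp0, hp1, hcx, hgx⟩ := convEnv_attained hab hF hx
  have step1 := tri (p := p0) (q := p1) (r := y) (yp := F p0) (yq := F p1)
    (yr := convEnv a b F y)
    (α := s * (1 - l)) (β := s * l) (γ := t) (z := s * x + t * y)
    (V := s * convEnv a b F x + t * convEnv a b F y)
    (mul_nonneg hs (by linarith [hl.2])) (mul_nonneg hs hl.1) ht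
    (by linear_combination hst) (by linear_combination s * hcx)
    (by linear_combination (-s) * hgx)
  rcases step1 with h | h | h
  · exact convEnv_le_of_segment hab hF hp0 hp1 h
  · exact convEnv_step2 hab hF hp0 hy h
  · exact convEnv_step2 hab hF hp1 hy h


/-- sorted attainment -/
lemma convEnv_attained_sorted (hab : a ≤ b) (hF : ContinuousOn F (Icc a b)) {x : ℝ}
    (hx : x ∈ Icc a b) :
    ∃ lam x₀ x₁ : ℝ, lam ∈ Set.Icc (0:ℝ) 1 ∧ x₀ ∈ Set.Icc a b ∧ x₁ ∈ Set.Icc a b ∧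
      x₀ ≤ x₁ ∧ x₀ ≤ x ∧ x ≤ x₁ ∧ (1 - lam) * x₀ + lam * x₁ = x ∧
      convEnv a b F x = (1 - lam) * F x₀ + lam * F x₁ := by
  obtain ⟨lam, x₀, x₁, hl, h0, h1, hc, hval⟩ := convEnv_attained hab hF hx
  rcases le_total x₀ x₁ with hle | hle
  · refine ⟨lam, x₀, x₁, hl, h0, h1, hle, ?_, ?_, hc, hval⟩
    · nlinarith [hl.1, hl.2]
    · nlinarith [hl.1, hl.2]
  · refine ⟨1 - lam, x₁, x₀, ⟨by linarith [hl.2], by linarith [hl.1]⟩, h1, h0, hle, ?_, ?_,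
      by linear_combination hc, by linear_combination hval⟩
    · nlinarith [hl.1, hl.2]
    · nlinarith [hl.1, hl.2]

/-- one-sided Lipschitz bound for the convex envelope -/
lemma convEnv_lip_one_sided (hab : a ≤ b) (hF : ContinuousOn F (Icc a b)) {M : ℝ}
    (hM0 : 0 ≤ M)
    (hM : ∀ x ∈ Icc a b, ∀ y ∈ Icc a b, |F y - F x| ≤ M * |y - x|)
    {x y : ℝ} (hx : x ∈ Icc a b) (hy : y ∈ Icc a b) :
    convEnv a b F y ≤ convEnv a b F x + M * |y - x| := by
  obtain ⟨lam, x₀, x₁, hl, h0, h1, hle, h0x, hx1, hc, hval⟩ :=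
    convEnv_attained_sorted hab hF hx
  have hFle := convEnv_le_self hab hF hy
  have habs : |F x₁ - F x₀| ≤ M * (x₁ - x₀) := by
    have := hM x₀ h0 x₁ h1
    rwa [abs_of_nonneg (show (0:ℝ) ≤ x₁ - x₀ by linarith)] at this
  have h5 : F x₁ - F x₀ ≤ M * (x₁ - x₀) := (le_abs_self _).trans habs
  have h5' : -(F x₁ - F x₀) ≤ M * (x₁ - x₀) := (neg_le_abs _).trans habs
  have hEnd0 : F x₀ - convEnv a b F x ≤ M * (x - x₀) := by
    have hd : x - x₀ = lam * (x₁ - x₀) := by linear_combination -hc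
    have he : F x₀ - convEnv a b F x = lam * (-(F x₁ - F x₀)) := by linear_combination -hval
    rw [he, hd]
    have := mul_nonneg hl.1 (show (0:ℝ) ≤ M * (x₁ - x₀) - (-(F x₁ - F x₀)) by linarith)
    nlinarith [this]
  have hEnd1 : F x₁ - convEnv a b F x ≤ M * (x₁ - x) := by
    have hd : x₁ - x = (1 - lam) * (x₁ - x₀) := by linear_combination hc
    have he : F x₁ - convEnv a b F x = (1 - lam) * (F x₁ - F x₀) := by linear_combination -hval
    rw [he, hd]
    have := mul_nonneg (show (0:ℝ) ≤ 1 - lam by linarith [hl.2])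
      (show (0:ℝ) ≤ M * (x₁ - x₀) - (F x₁ - F x₀) by linarith)
    nlinarith [this]
  rcases lt_or_ge y x₀ with hy0 | hy0
  · -- y to the left of x₀
    have h2 : F y - F x₀ ≤ M * (x₀ - y) := by
      have := hM x₀ h0 y hy
      rw [abs_of_nonpos (show y - x₀ ≤ 0 by linarith), neg_sub] at this
      exact (le_abs_self _).trans this
    rw [abs_of_nonpos (show y - x ≤ 0 by linarith), neg_sub]
    linarith [hFle]
  rcases le_or_gt y x₁ with hy1 | hy1
  · -- y in [x₀, x₁]
    rcases eq_or_lt_of_le hle with heq | hlt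
    · have hyx0 : y = x₀ := le_antisymm (heq ▸ hy1) hy0
      have hxx0 : x = x₀ := le_antisymm (heq ▸ hx1) h0x
      rw [hyx0, hxx0]
      simp [mul_nonneg hM0 (abs_nonneg _)]
    · set t := (y - x₀) / (x₁ - x₀) with htdef
      have hx10 : x₁ - x₀ ≠ 0 := sub_ne_zero.2 (ne_of_gt hlt)
      have ht1 : t * (x₁ - x₀) = y - x₀ := by rw [htdef]; exact div_mul_cancel₀ _ hx10
      have htmem : t ∈ Icc (0:ℝ) 1 := ⟨div_nonneg (by linarith) (by linarith),
        by rw [htdef, div_le_one (by linarith)]; linarith⟩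
      have hcy : (1 - t) * x₀ + t * x₁ = y := by
        have h3 : ((1 - t) * x₀ + t * x₁) - y = t * (x₁ - x₀) - (y - x₀) := by ring
        rw [ht1] at h3; linarith
      have hgy : convEnv a b F y ≤ (1 - t) * F x₀ + t * F x₁ := by
        rw [← hcy]; exact convEnv_le_combo hab hF h0 h1 htmem
      have hdiff : ((1 - t) * F x₀ + t * F x₁) - convEnv a b F x
          = (t - lam) * (F x₁ - F x₀) := by linear_combination -hval
      have hyx : y - x = (t - lam) * (x₁ - x₀) := by
        have h3 : y - x = (t * (x₁ - x₀) + x₀) - ((1 - lam) * x₀ + lam * x₁) := by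
          rw [ht1]; linarith [hc]
        rw [h3]; ring
      have hbound : (t - lam) * (F x₁ - F x₀) ≤ M * |y - x| := by
        rcases le_total lam t with hlt' | hlt'
        · rw [hyx, abs_of_nonneg (mul_nonneg (by linarith) (by linarith))]
          have h6 : 0 ≤ (t - lam) * (M * (x₁ - x₀) - (F x₁ - F x₀)) :=
            mul_nonneg (by linarith) (by linarith)
          nlinarith [h6]
        · have hsign : (t - lam) * (x₁ - x₀) ≤ 0 := by
            nlinarith [mul_nonneg (show (0:ℝ) ≤ lam - t by linarith)
              (show (0:ℝ) ≤ x₁ - x₀ by linarith)]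
          rw [hyx, abs_of_nonpos hsign]
          have h6 : 0 ≤ (lam - t) * (M * (x₁ - x₀) + (F x₁ - F x₀)) :=
            mul_nonneg (by linarith) (by linarith)
          nlinarith [h6]
      linarith [hgy, hdiff, hbound]
  · -- y to the right of x₁
    have h2 : F y - F x₁ ≤ M * (y - x₁) := by
      have := hM x₁ h1 y hy
      rw [abs_of_nonneg (show (0:ℝ) ≤ y - x₁ by linarith)] at this
      exact (le_abs_self _).trans this
    rw [abs_of_nonneg (show (0:ℝ) ≤ y - x by linarith)]
    linarith [hFle]

lemma convEnv_lipschitz (hab : a ≤ b) (hF : ContinuousOn F (Icc a b)) {M : ℝ}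
    (hM0 : 0 ≤ M)
    (hM : ∀ x ∈ Icc a b, ∀ y ∈ Icc a b, |F y - F x| ≤ M * |y - x|)
    {x y : ℝ} (hx : x ∈ Icc a b) (hy : y ∈ Icc a b) :
    |convEnv a b F y - convEnv a b F x| ≤ M * |y - x| := by
  rw [abs_le]
  constructor
  · have := convEnv_lip_one_sided hab hF hM0 hM hy hx
    rw [abs_sub_comm] at this
    linarith
  · linarith [convEnv_lip_one_sided hab hF hM0 hM hx hy]


/-- the contact set -/
def touchSet (a b : ℝ) (F : ℝ → ℝ) : Set ℝ := {x ∈ Icc a b | F x = convEnv a b F x}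

lemma touchSet_subset_Icc : touchSet a b F ⊆ Icc a b := fun _ hx => hx.1

lemma left_mem_touchSet (hab : a ≤ b) : a ∈ touchSet a b F :=
  ⟨left_mem_Icc.2 hab, (convEnv_eq_left hab).symm⟩

lemma right_mem_touchSet (hab : a ≤ b) : b ∈ touchSet a b F :=
  ⟨right_mem_Icc.2 hab, (convEnv_eq_right hab).symm⟩

lemma isClosed_touchSet (hab : a ≤ b) (hF : ContinuousOn F (Icc a b)) :
    IsClosed (touchSet a b F) := by
  rw [← isSeqClosed_iff_isClosed]
  intro u x hu hux
  have hxIcc : x ∈ Icc a b := isClosed_Icc.isSeqClosed (fun n => (hu n).1) hux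
  rcases eq_or_lt_of_le hxIcc.1 with h | h
  · exact h ▸ left_mem_touchSet hab
  rcases eq_or_lt_of_le hxIcc.2 with h' | h'
  · exact h'.symm ▸ right_mem_touchSet hab
  · refine ⟨hxIcc, ?_⟩
    have hgc : ContinuousOn (convEnv a b F) (Ioo a b) :=
      ((convexOn_convEnv hab hF).subset Ioo_subset_Icc_self (convex_Ioo a b)).continuousOn
        isOpen_Ioo
    have hu' : Tendsto u atTop (𝓝[Icc a b] x) :=
      tendsto_nhdsWithin_of_tendsto_nhds_of_eventually_within u hux
        (Eventually.of_forall fun n => (hu n).1)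
    have hFt : Tendsto (fun n => F (u n)) atTop (𝓝 (F x)) := (hF x hxIcc).tendsto.comp hu'
    have hgt : Tendsto (fun n => convEnv a b F (u n)) atTop (𝓝 (convEnv a b F x)) :=
      ((hgc.continuousAt (Ioo_mem_nhds h h')).tendsto).comp hux
    have he : (fun n => F (u n)) = fun n => convEnv a b F (u n) :=
      funext fun n => (hu n).2
    rw [he] at hFt
    exact tendsto_nhds_unique hFt hgt

lemma gap_spec (hab : a ≤ b) (hF : ContinuousOn F (Icc a b)) {y : ℝ}
    (hy : y ∈ Ioo a b) (hyK : y ∉ touchSet a b F) :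
    ∃ c d : ℝ, c ∈ touchSet a b F ∧ d ∈ touchSet a b F ∧ c < y ∧ y < d ∧
      (∀ z ∈ Ioo c d, z ∉ touchSet a b F) ∧
      (∀ k ∈ touchSet a b F, k ≤ y → k ≤ c) ∧
      (∀ k ∈ touchSet a b F, y ≤ k → d ≤ k) := by
  have hKa : (touchSet a b F ∩ Icc a y).Nonempty :=
    ⟨a, left_mem_touchSet hab, left_mem_Icc.2 hy.1.le⟩
  have hKb : (touchSet a b F ∩ Icc y b).Nonempty :=
    ⟨b, right_mem_touchSet hab, right_mem_Icc.2 hy.2.le⟩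
  have hcl := isClosed_touchSet hab hF
  have hbddA : BddAbove (touchSet a b F ∩ Icc a y) := ⟨y, fun k hk => hk.2.2⟩
  have hbddB : BddBelow (touchSet a b F ∩ Icc y b) := ⟨y, fun k hk => hk.2.1⟩
  set c := sSup (touchSet a b F ∩ Icc a y) with hcdef
  set d := sInf (touchSet a b F ∩ Icc y b) with hddef
  have hcmem : c ∈ touchSet a b F ∩ Icc a y :=
    (hcl.inter isClosed_Icc).csSup_mem hKa hbddA
  have hdmem : d ∈ touchSet a b F ∩ Icc y b :=
    (hcl.inter isClosed_Icc).csInf_mem hKb hbddB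
  have hcy : c < y := lt_of_le_of_ne hcmem.2.2 (fun h => hyK (h ▸ hcmem.1))
  have hyd : y < d := lt_of_le_of_ne hdmem.2.1 (fun h => hyK (h.symm ▸ hdmem.1))
  have hub : ∀ k ∈ touchSet a b F, k ≤ y → k ≤ c :=
    fun k hk hky => le_csSup hbddA ⟨hk, hk.1.1, hky⟩
  have hlb : ∀ k ∈ touchSet a b F, y ≤ k → d ≤ k :=
    fun k hk hky => csInf_le hbddB ⟨hk, hky, hk.1.2⟩
  refine ⟨c, d, hcmem.1, hdmem.1, hcy, hyd, ?_, hub, hlb⟩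
  intro z hz hzK
  rcases le_total z y with hzy | hzy
  · exact absurd (hub z hzK hzy) (not_le.2 hz.1)
  · exact absurd (hlb z hzK hzy) (not_le.2 hz.2)

/-- the envelope is affine on gaps, with constant `derivWithin` -/
lemma gap_deriv_const (hab : a ≤ b) (hF : ContinuousOn F (Icc a b)) {y c d : ℝ}
    (hy : y ∈ Ioo a b) (hyK : y ∉ touchSet a b F)
    (hcy : c < y) (hyd : y < d)
    (hub : ∀ k ∈ touchSet a b F, k ≤ y → k ≤ c)
    (hlb : ∀ k ∈ touchSet a b F, y ≤ k → d ≤ k) :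
    ∃ m : ℝ, ∀ z ∈ Ioo c d, derivWithin (convEnv a b F) (Icc a b) z = m := by
  have hyIcc : y ∈ Icc a b := Ioo_subset_Icc_self hy
  obtain ⟨lam, x₀, x₁, hl, h0, h1, hle, h0y, hy1, hcomb, hval⟩ :=
    convEnv_attained_sorted hab hF hyIcc
  have hyne : F y ≠ convEnv a b F y := fun h => hyK ⟨hyIcc, h⟩
  have hconv := convexOn_convEnv hab hF
  have hx01 : x₀ < x₁ := by
    rcases eq_or_lt_of_le hle with heq | h
    · exfalso
      have hx0y : x₀ = y := le_antisymm h0y (heq ▸ hy1)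
      apply hyne
      rw [hval, ← hx0y, ← heq]; ring
    · exact h
  have hlam0 : 0 < lam := by
    rcases eq_or_lt_of_le hl.1 with h | h
    · exfalso
      have : x₀ = y := by rw [← hcomb, ← h]; ring
      exact hyne (by rw [hval, ← h, this]; ring)
    · exact h
  have hlam1 : lam < 1 := by
    rcases eq_or_lt_of_le hl.2 with h | h
    · exfalso
      have : x₁ = y := by rw [← hcomb, h]; ring
      exact hyne (by rw [hval, h, this]; ring)
    · exact h
  have hx0y : x₀ < y := by nlinarith [hcomb]
  have hyx1 : y < x₁ := by nlinarith [hcomb]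
  have hx10 : x₁ - x₀ ≠ 0 := sub_ne_zero.2 (ne_of_gt hx01)
  set m := (F x₁ - F x₀) / (x₁ - x₀) with hmdef
  have hm : m * (x₁ - x₀) = F x₁ - F x₀ := div_mul_cancel₀ _ hx10
  set L : ℝ → ℝ := fun z => F x₀ + m * (z - x₀) with hLdef
  have hIccsub : Icc x₀ x₁ ⊆ Icc a b := Icc_subset_Icc h0.1 h1.2
  have hLx₀ : L x₀ = F x₀ := by simp [hLdef]
  have hLx₁ : L x₁ = F x₁ := by
    show F x₀ + m * (x₁ - x₀) = F x₁
    rw [hm]; ring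
  have hLchord : ∀ z ∈ Icc x₀ x₁, convEnv a b F z ≤ L z := by
    intro z hz
    set t := (z - x₀) / (x₁ - x₀) with htdef
    have ht1 : t * (x₁ - x₀) = z - x₀ := div_mul_cancel₀ _ hx10
    have htmem : t ∈ Icc (0:ℝ) 1 := ⟨div_nonneg (by linarith [hz.1]) (by linarith),
      by rw [htdef, div_le_one (by linarith)]; linarith [hz.2]⟩
    have hcz : (1 - t) * x₀ + t * x₁ = z := by
      have h3 : ((1 - t) * x₀ + t * x₁) - z = t * (x₁ - x₀) - (z - x₀) := by ring
      rw [ht1] at h3; linarith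
    have hvz : (1 - t) * F x₀ + t * F x₁ = L z := by
      show (1 - t) * F x₀ + t * F x₁ = F x₀ + m * (z - x₀)
      rw [← ht1]
      linear_combination (-t) * hm
    rw [← hvz, ← hcz]
    exact convEnv_le_combo hab hF h0 h1 htmem
  have hLy : L y = convEnv a b F y := by
    show F x₀ + m * (y - x₀) = convEnv a b F y
    have hd : y - x₀ = lam * (x₁ - x₀) := by linear_combination -hcomb
    rw [hval, hd]
    nlinarith [hm]
  have hgeL : ∀ z ∈ Icc x₀ x₁, L z ≤ convEnv a b F z := by
    intro z hz
    rcases le_or_gt z y with hzy | hzy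
    · set s := (y - z) / (x₁ - z) with hsdef
      have hx1z : (0:ℝ) < x₁ - z := by linarith
      have hx1z' : x₁ - z ≠ 0 := ne_of_gt hx1z
      have hs1 : s * (x₁ - z) = y - z := div_mul_cancel₀ _ hx1z'
      have hs0 : 0 ≤ s := div_nonneg (by linarith) (by linarith)
      have hs1' : s < 1 := by rw [hsdef, div_lt_one hx1z]; linarith
      have hcomb2 : (1 - s) * z + s * x₁ = y := by
        have h3 : ((1 - s) * z + s * x₁) - y = s * (x₁ - z) - (y - z) := by ring
        rw [hs1] at h3; linarith
      have hcvx : convEnv a b F y ≤ (1 - s) * convEnv a b F z + s * convEnv a b F x₁ := by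
        have := hconv.2 (hIccsub hz) h1 (by linarith : (0:ℝ) ≤ 1 - s) hs0 (by ring)
        simp only [smul_eq_mul] at this
        rwa [hcomb2] at this
      have hgx₁ : convEnv a b F x₁ ≤ L x₁ := by rw [hLx₁]; exact convEnv_le_self hab hF h1
      have hLaff : L y = (1 - s) * L z + s * L x₁ := by
        show F x₀ + m * (y - x₀) = (1 - s) * (F x₀ + m * (z - x₀)) + s * (F x₀ + m * (x₁ - x₀))
        linear_combination (-m) * hcomb2
      have hkey : (1 - s) * L z ≤ (1 - s) * convEnv a b F z := by
        have h4 : L y ≤ (1 - s) * convEnv a b F z + s * L x₁ := by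
          rw [hLy]
          calc convEnv a b F y ≤ (1 - s) * convEnv a b F z + s * convEnv a b F x₁ := hcvx
          _ ≤ (1 - s) * convEnv a b F z + s * L x₁ := by nlinarith [hgx₁, hs0]
        rw [hLaff] at h4
        linarith
      exact le_of_mul_le_mul_left hkey (by linarith)
    · set s := (y - x₀) / (z - x₀) with hsdef
      have hzx0 : (0:ℝ) < z - x₀ := by linarith
      have hzx0' : z - x₀ ≠ 0 := ne_of_gt hzx0
      have hs1 : s * (z - x₀) = y - x₀ := div_mul_cancel₀ _ hzx0'
      have hs0 : 0 < s := div_pos (by linarith) hzx0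
      have hsle : s ≤ 1 := by rw [hsdef, div_le_one hzx0]; linarith
      have hcomb2 : (1 - s) * x₀ + s * z = y := by
        have h3 : ((1 - s) * x₀ + s * z) - y = s * (z - x₀) - (y - x₀) := by ring
        rw [hs1] at h3; linarith
      have hcvx : convEnv a b F y ≤ (1 - s) * convEnv a b F x₀ + s * convEnv a b F z := by
        have := hconv.2 h0 (hIccsub hz) (by linarith : (0:ℝ) ≤ 1 - s) hs0.le (by ring)
        simp only [smul_eq_mul] at this
        rwa [hcomb2] at this
      have hgx₀ : convEnv a b F x₀ ≤ L x₀ := by rw [hLx₀]; exact convEnv_le_self hab hF h0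
      have hLaff : L y = (1 - s) * L x₀ + s * L z := by
        show F x₀ + m * (y - x₀) = (1 - s) * (F x₀ + m * (x₀ - x₀)) + s * (F x₀ + m * (z - x₀))
        linear_combination (-m) * hcomb2
      have hkey : s * L z ≤ s * convEnv a b F z := by
        have h4 : L y ≤ (1 - s) * L x₀ + s * convEnv a b F z := by
          rw [hLy]
          calc convEnv a b F y ≤ (1 - s) * convEnv a b F x₀ + s * convEnv a b F z := hcvx
          _ ≤ (1 - s) * L x₀ + s * convEnv a b F z := by nlinarith [hgx₀, hsle]
        rw [hLaff] at h4
        linarith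
      exact le_of_mul_le_mul_left hkey hs0
  -- x₀ and x₁ are in the contact set
  have hx₀K : x₀ ∈ touchSet a b F := by
    refine ⟨h0, le_antisymm ?_ ?_⟩
    · rw [← hLx₀]; exact hgeL x₀ (left_mem_Icc.2 hle)
    · exact convEnv_le_self hab hF h0
  have hx₁K : x₁ ∈ touchSet a b F := by
    refine ⟨h1, le_antisymm ?_ ?_⟩
    · rw [← hLx₁]; exact hgeL x₁ (right_mem_Icc.2 hle)
    · exact convEnv_le_self hab hF h1
  have hx₀c : x₀ ≤ c := hub x₀ hx₀K h0y
  have hdx₁ : d ≤ x₁ := hlb x₁ hx₁K hy1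
  refine ⟨m, fun z hz => ?_⟩
  have hz01 : z ∈ Ioo x₀ x₁ := ⟨lt_of_le_of_lt hx₀c hz.1, lt_of_lt_of_le hz.2 hdx₁⟩
  have hzab : z ∈ Ioo a b := ⟨lt_of_le_of_lt h0.1 hz01.1, lt_of_lt_of_le hz01.2 h1.2⟩
  have heqn : convEnv a b F =ᶠ[𝓝 z] L := by
    filter_upwards [Ioo_mem_nhds hz01.1 hz01.2] with w hw
    exact le_antisymm (hLchord w (Ioo_subset_Icc_self hw)) (hgeL w (Ioo_subset_Icc_self hw))
  rw [derivWithin_of_mem_nhds (Icc_mem_nhds hzab.1 hzab.2), heqn.deriv_eq]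
  have hL' : HasDerivAt L m z := by
    have h1' : HasDerivAt (fun w : ℝ => m * (w - x₀)) m z := by
      simpa using ((hasDerivAt_id z).sub_const x₀).const_mul m
    simpa [hLdef] using h1'.const_add (F x₀)
  exact hL'.deriv


section Primit
variable {f : ℝ → ℝ}

lemma primit_sub_eq (hf : ContinuousOn f (Icc a b)) {x y : ℝ}
    (hx : x ∈ Icc a b) (hy : y ∈ Icc a b) :
    primit a f y - primit a f x = ∫ t in x..y, f t := by
  have hab : a ≤ b := le_trans hx.1 hx.2
  have haIcc : a ∈ Icc a b := left_mem_Icc.2 hab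
  have h1 : IntervalIntegrable f volume a y :=
    (hf.mono (uIcc_subset_Icc haIcc hy)).intervalIntegrable
  have h2 : IntervalIntegrable f volume a x :=
    (hf.mono (uIcc_subset_Icc haIcc hx)).intervalIntegrable
  exact intervalIntegral.integral_interval_sub_left h1 h2

lemma primit_lip (hf : ContinuousOn f (Icc a b)) :
    ∃ M : ℝ, 0 ≤ M ∧ (∀ z ∈ Icc a b, |f z| ≤ M) ∧
      ∀ x ∈ Icc a b, ∀ y ∈ Icc a b, |primit a f y - primit a f x| ≤ M * |y - x| := by
  obtain ⟨C, hC⟩ := isCompact_Icc.exists_bound_of_continuousOn hf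
  refine ⟨max C 0, le_max_right _ _, fun z hz => (hC z hz).trans (le_max_left _ _), ?_⟩
  intro x hx y hy
  rw [primit_sub_eq hf hx hy]
  have := intervalIntegral.norm_integral_le_of_norm_le_const (C := max C 0) (f := f)
    (a := x) (b := y) (fun z hz => by
      have hzI : z ∈ Icc a b := (uIcc_subset_Icc hx hy) (uIoc_subset_uIcc hz)
      exact (hC z hzI).trans (le_max_left _ _))
  simpa [Real.norm_eq_abs, abs_sub_comm] using this

lemma primit_continuousOn (hf : ContinuousOn f (Icc a b)) :
    ContinuousOn (primit a f) (Icc a b) := by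
  obtain ⟨M, hM0, -, hlip⟩ := primit_lip hf
  have : LipschitzOnWith M.toNNReal (primit a f) (Icc a b) := by
    rw [lipschitzOnWith_iff_dist_le_mul]
    intro x hx y hy
    rw [Real.dist_eq, Real.dist_eq, Real.coe_toNNReal _ hM0]
    exact hlip y hy x hx
  exact this.continuousOn

end Primit

/-- bound on derivWithin of a Lipschitz function -/
lemma abs_derivWithin_le_of_lip {g : ℝ → ℝ} {M x : ℝ} (hab : a < b) (hx : x ∈ Icc a b)
    (hM0 : 0 ≤ M)
    (hlip : ∀ u ∈ Icc a b, ∀ v ∈ Icc a b, |g v - g u| ≤ M * |v - u|) :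
    |derivWithin g (Icc a b) x| ≤ M := by
  by_cases hd : DifferentiableWithinAt ℝ g (Icc a b) x
  · have h := hd.hasDerivWithinAt
    rw [hasDerivWithinAt_iff_tendsto_slope] at h
    have hneb : (𝓝[Icc a b \ {x}] x).NeBot := by
      rcases eq_or_lt_of_le hx.2 with hxb | hxb
      · have hsub : Ioo a x ⊆ Icc a b \ {x} := fun z hz =>
          ⟨⟨hz.1.le, le_of_lt (hxb ▸ hz.2)⟩, fun hzz => absurd (hzz ▸ hz.2) (lt_irrefl _)⟩
        have hcl : x ∈ closure (Ioo a x) := by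
          rw [closure_Ioo (ne_of_lt (hxb ▸ hab))]
          exact ⟨(hxb ▸ hab).le, le_refl x⟩
        exact (mem_closure_iff_nhdsWithin_neBot.1 hcl).mono (nhdsWithin_mono x hsub)
      · have hsub : Ioo x b ⊆ Icc a b \ {x} := fun z hz =>
          ⟨⟨le_of_lt (lt_of_le_of_lt hx.1 hz.1), hz.2.le⟩,
            fun hzz => absurd (hzz ▸ hz.1) (lt_irrefl _)⟩
        have hcl : x ∈ closure (Ioo x b) := by
          rw [closure_Ioo (ne_of_lt hxb)]
          exact ⟨le_refl x, hxb.le⟩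
        exact (mem_closure_iff_nhdsWithin_neBot.1 hcl).mono (nhdsWithin_mono x hsub)
    have habs : Tendsto (fun y => |slope g x y|) (𝓝[Icc a b \ {x}] x)
        (𝓝 |derivWithin g (Icc a b) x|) := h.abs
    refine le_of_tendsto habs ?_
    filter_upwards [self_mem_nhdsWithin] with y hy
    have hyx : y ≠ x := by
      intro hh; exact hy.2 (by simp [hh])
    rw [slope_def_field, div_eq_mul_inv, ← div_eq_mul_inv, abs_div,
      div_le_iff₀ (abs_pos.2 (sub_ne_zero.2 hyx))]
    calc |g y - g x| ≤ M * |y - x| := hlip x hx y hy.1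
    _ = M * |y - x| := rfl
  · rw [derivWithin_zero_of_not_differentiableWithinAt hd]
    simpa using hM0


/-- a.e. on the contact set, `J` is differentiable with derivative `deriv φ` -/
lemma ae_deriv_eq_on_touch {K : Set ℝ} (hKcl : IsClosed K) {J φ : ℝ → ℝ} {a b L : ℝ}
    (hL0 : 0 ≤ L) (hφd : Differentiable ℝ φ)
    (hJK : ∀ y ∈ K, J y = φ y)
    (hgap : ∀ y ∈ Ioo a b, y ∉ K → ∃ c d : ℝ, c ∈ K ∧ d ∈ K ∧ c < y ∧ y < d ∧
      (∀ z ∈ Ioo c d, z ∉ K) ∧ |J y - φ y| ≤ L * (y - c) ∧ |J y - φ y| ≤ L * (d - y)) :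
    ∀ᵐ x ∂(volume : Measure ℝ), x ∈ K ∩ Ioo a b → deriv J x = deriv φ x := by
  have hKm : MeasurableSet K := hKcl.measurableSet
  have hdens := Besicovitch.ae_tendsto_measure_inter_div_of_measurableSet volume hKm
  filter_upwards [hdens] with x hx hmem
  obtain ⟨hxK, hxI⟩ := hmem
  rw [indicator_of_mem hxK] at hx
  simp only [Pi.one_apply] at hx
  suffices hJd : HasDerivAt J (deriv φ x) x by rw [hJd.deriv]
  have hφx : HasDerivAt φ (deriv φ x) x := (hφd x).hasDerivAt
  have hJx : J x = φ x := hJK x hxK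
  have hdiff0 : HasDerivAt (fun y => J y - φ y) 0 x := by
    rw [hasDerivAt_iff_isLittleO, Asymptotics.isLittleO_iff]
    intro ε hε
    set ε₁ : ℝ := min (ε / (2 * L + 1)) 1 with hε₁def
    have hε₁pos : 0 < ε₁ := lt_min (div_pos hε (by linarith)) one_pos
    have hε₁le1 : ε₁ ≤ 1 := min_le_right _ _
    have hkey : 2 * L * ε₁ ≤ ε := by
      have h2 : ε₁ ≤ ε / (2 * L + 1) := min_le_left _ _
      have h3 : (ε / (2 * L + 1)) * (2 * L + 1) = ε := div_mul_cancel₀ _ (by positivity)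
      nlinarith
    -- eventual volume bound
    have h1 : ∀ᶠ r in 𝓝[>] (0:ℝ),
        volume (Metric.closedBall x r \ K) ≤ ENNReal.ofReal (ε₁ * (2 * r)) := by
      have hne : ENNReal.ofReal ε₁ ≠ 0 := by
        simp only [ne_eq, ENNReal.ofReal_eq_zero, not_le]; exact hε₁pos
      have hlt : 1 - ENNReal.ofReal ε₁ < 1 :=
        ENNReal.sub_lt_self ENNReal.one_ne_top one_ne_zero hne
      have hev := hx (Ioi_mem_nhds hlt)
      filter_upwards [hev, self_mem_nhdsWithin] with r hr hrpos
      rw [mem_Ioi] at hrpos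
      simp only [mem_preimage, mem_Ioi] at hr
      have hBvol : volume (Metric.closedBall x r) = ENNReal.ofReal (2 * r) :=
        Real.volume_closedBall x r
      have hB0 : volume (Metric.closedBall x r) ≠ 0 := by
        rw [hBvol]
        simp only [ne_eq, ENNReal.ofReal_eq_zero, not_le]
        linarith
      have hBtop : volume (Metric.closedBall x r) ≠ ⊤ := by
        rw [hBvol]; exact ENNReal.ofReal_ne_top
      have hKB : (1 - ENNReal.ofReal ε₁) * volume (Metric.closedBall x r)
          < volume (K ∩ Metric.closedBall x r) := by
        have h4 := ENNReal.mul_lt_mul_left hB0 hBtop hr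
        rwa [ENNReal.div_mul_cancel hB0 hBtop] at h4
      by_contra hcon
      push_neg at hcon
      have hadd : volume (Metric.closedBall x r ∩ K) + volume (Metric.closedBall x r \ K)
          = volume (Metric.closedBall x r) := measure_inter_add_diff _ hKm
      have hsum : (1 - ENNReal.ofReal ε₁) * volume (Metric.closedBall x r)
            + ENNReal.ofReal (ε₁ * (2 * r))
          < volume (Metric.closedBall x r ∩ K) + volume (Metric.closedBall x r \ K) := by
        rw [inter_comm K] at hKB
        exact ENNReal.add_lt_add hKB hcon
      rw [hadd] at hsum
      have hLHS : (1 - ENNReal.ofReal ε₁) * volume (Metric.closedBall x r)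
            + ENNReal.ofReal (ε₁ * (2 * r)) = volume (Metric.closedBall x r) := by
        rw [hBvol]
        have hofe : 1 - ENNReal.ofReal ε₁ = ENNReal.ofReal (1 - ε₁) := by
          rw [ENNReal.ofReal_sub 1 hε₁pos.le, ENNReal.ofReal_one]
        rw [hofe, ← ENNReal.ofReal_mul (by linarith), ← ENNReal.ofReal_add
          (by nlinarith) (by nlinarith)]
        congr 1
        ring
      rw [hLHS] at hsum
      exact absurd hsum (lt_irrefl _)
    -- convert to explicit δ
    rw [eventually_nhdsWithin_iff, Metric.eventually_nhds_iff] at h1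
    obtain ⟨δ, hδpos, hδ⟩ := h1
    have hδ' : ∀ r : ℝ, 0 < r → r < δ →
        volume (Metric.closedBall x r \ K) ≤ ENNReal.ofReal (ε₁ * (2 * r)) := by
      intro r h0 hrδ
      exact hδ (by rw [Real.dist_eq, sub_zero, abs_of_pos h0]; exact hrδ) h0
    set δ' : ℝ := min δ (min (x - a) (b - x)) with hδ'def
    have hδ'pos : 0 < δ' := lt_min hδpos (lt_min (by linarith [hxI.1]) (by linarith [hxI.2]))
    rw [Metric.eventually_nhds_iff]
    refine ⟨δ', hδ'pos, fun y hy => ?_⟩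
    simp only [hJx, sub_self, sub_zero, smul_zero, Real.norm_eq_abs]
    rcases eq_or_ne y x with rfl | hyx
    · simp [hJx]
    have hr0 : 0 < |y - x| := abs_pos.2 (sub_ne_zero.2 hyx)
    rw [Real.dist_eq] at hy
    have hrδ : |y - x| < δ := lt_of_lt_of_le hy (min_le_left _ _)
    have hya : a < y := by
      have := lt_of_lt_of_le hy ((min_le_right _ _).trans (min_le_left _ _))
      have := abs_lt.1 this
      linarith [hxI.1, this.1]
    have hyb : y < b := by
      have := lt_of_lt_of_le hy ((min_le_right _ _).trans (min_le_right _ _))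
      have := abs_lt.1 this
      linarith [hxI.2, this.2]
    by_cases hyK : y ∈ K
    · rw [hJK y hyK]
      simp only [sub_self, abs_zero]
      positivity
    obtain ⟨c, d, hcK, hdK, hcy, hyd, hnone, hb1, hb2⟩ := hgap y ⟨hya, hyb⟩ hyK
    have hvolr := hδ' |y - x| hr0 hrδ
    rcases lt_or_gt_of_ne hyx with hylt | hygt
    · -- y < x : use right endpoint d ≤ x
      have hdx : d ≤ x := by
        by_contra hcon
        push_neg at hcon
        exact (hnone x ⟨lt_trans hcy hylt, hcon⟩) hxK
      have hsub : Ioo y d ⊆ Metric.closedBall x |y - x| \ K := by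
        intro z hz
        refine ⟨?_, fun hzK => (hnone z ⟨lt_trans hcy hz.1, hz.2⟩) hzK⟩
        rw [Real.closedBall_eq_Icc]
        constructor
        · rw [abs_of_nonpos (by linarith)]; linarith [hz.1]
        · rw [abs_of_nonpos (by linarith)]; linarith [hz.2]
      have hvol2 : ENNReal.ofReal (d - y) ≤ ENNReal.ofReal (ε₁ * (2 * |y - x|)) := by
        rw [← Real.volume_Ioo]
        exact (measure_mono hsub).trans hvolr
      have hdy : d - y ≤ ε₁ * (2 * |y - x|) := by
        rwa [ENNReal.ofReal_le_ofReal_iff (by positivity)] at hvol2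
      calc |J y - φ y| ≤ L * (d - y) := hb2
      _ ≤ L * (ε₁ * (2 * |y - x|)) := by
          apply mul_le_mul_of_nonneg_left hdy hL0
      _ ≤ ε * |y - x| := by nlinarith [hr0]
    · -- y > x : use left endpoint c ≥ x
      have hxc : x ≤ c := by
        by_contra hcon
        push_neg at hcon
        exact (hnone x ⟨hcon, lt_trans hygt hyd⟩) hxK
      have hsub : Ioo c y ⊆ Metric.closedBall x |y - x| \ K := by
        intro z hz
        refine ⟨?_, fun hzK => (hnone z ⟨hz.1, lt_trans hz.2 hyd⟩) hzK⟩
        rw [Real.closedBall_eq_Icc]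
        constructor
        · rw [abs_of_nonneg (by linarith)]; linarith [hz.1]
        · rw [abs_of_nonneg (by linarith)]; linarith [hz.2]
      have hvol2 : ENNReal.ofReal (y - c) ≤ ENNReal.ofReal (ε₁ * (2 * |y - x|)) := by
        rw [← Real.volume_Ioo]
        exact (measure_mono hsub).trans hvolr
      have hyc : y - c ≤ ε₁ * (2 * |y - x|) := by
        rwa [ENNReal.ofReal_le_ofReal_iff (by positivity)] at hvol2
      calc |J y - φ y| ≤ L * (y - c) := hb1
      _ ≤ L * (ε₁ * (2 * |y - x|)) := by
          apply mul_le_mul_of_nonneg_left hyc hL0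
      _ ≤ ε * |y - x| := by nlinarith [hr0]
  have h5 : HasDerivAt (fun y => (J y - φ y) + φ y) (0 + deriv φ x) x := hdiff0.add hφx
  have h6 : HasDerivAt J (0 + deriv φ x) x :=
    h5.congr_of_eventuallyEq (Eventually.of_forall fun y => by ring)
  simpa using h6


lemma gap_unique {K : Set ℝ} {c d c' d' z : ℝ}
    (hc : c ∈ K) (hd : d ∈ K) (hc' : c' ∈ K) (hd' : d' ∈ K)
    (hn : ∀ w ∈ Ioo c d, w ∉ K) (hn' : ∀ w ∈ Ioo c' d', w ∉ K)
    (hz : z ∈ Ioo c d) (hz' : z ∈ Ioo c' d') : c = c' ∧ d = d' := by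
  constructor
  · rcases lt_trichotomy c c' with h | h | h
    · exact absurd hc' (hn c' ⟨h, lt_trans hz'.1 hz.2⟩)
    · exact h
    · exact absurd hc (hn' c ⟨h, lt_trans hz.1 hz'.2⟩)
  · rcases lt_trichotomy d d' with h | h | h
    · exact absurd hd (hn' d ⟨lt_trans hz'.1 hz.2, h⟩)
    · exact h
    · exact absurd hd' (hn d' ⟨lt_trans hz.1 hz'.2, h⟩)

lemma gap_integral_eq {c d m s : ℝ} (hcd : c < d) {T J φ : ℝ → ℝ}
    (hT : ∀ z ∈ Ioo c d, T z = m) (hJd : ∀ z ∈ Ioo c d, deriv J z = s)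
    (hs : s * (d - c) = φ d - φ c)
    (hφd : Differentiable ℝ φ) (hφc : Continuous (deriv φ)) :
    ∫ z in Ioo c d, T z * deriv J z = ∫ z in Ioo c d, T z * deriv φ z := by
  have h1 : ∫ z in Ioo c d, T z * deriv J z = ∫ _z in Ioo c d, (m * s : ℝ) :=
    setIntegral_congr_fun measurableSet_Ioo (fun z hz => by rw [hT z hz, hJd z hz])
  have h2 : ∫ z in Ioo c d, T z * deriv φ z = ∫ z in Ioo c d, m * deriv φ z :=
    setIntegral_congr_fun measurableSet_Ioo (fun z hz => by rw [hT z hz])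
  rw [h1, h2, setIntegral_const, MeasureTheory.integral_const_mul]
  have h3 : ∫ z in Ioo c d, deriv φ z = φ d - φ c := by
    rw [← MeasureTheory.integral_Ioc_eq_integral_Ioo,
      ← intervalIntegral.integral_of_le hcd.le]
    exact intervalIntegral.integral_deriv_eq_sub (fun x _ => hφd x)
      (hφc.intervalIntegrable c d)
  rw [h3, measureReal_def, Real.volume_Ioo, ENNReal.toReal_ofReal (by linarith), smul_eq_mul]
  linear_combination m * hs


/-- Fundamental integral identity: `∫_a^b Tf · (J^φ_F)' = ∫_a^b Tf · φ'`. -/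
theorem Tcv_mul_Jderiv_eq (a b : ℝ) (hab : a < b) (f : ℝ → ℝ)
    (hf : ContinuousOn f (Set.Icc a b))
    (hnf : NoFlat a b (primit a f))
    (φ : ℝ → ℝ) (hφ : ContDiff ℝ (⊤ : ℕ∞) φ) (hsupp : tsupport φ ⊆ Set.Ioo a b)
    (J : ℝ → ℝ) (hJ : IsJ a b (primit a f) φ J) :
    (∫ x in a..b, Tcv a b f x * deriv J x) = ∫ x in a..b, Tcv a b f x * deriv φ x := by
  classical
  have hF : ContinuousOn (primit a f) (Icc a b) := primit_continuousOn hf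
  obtain ⟨M, hM0, hMf, hMlip⟩ := primit_lip hf
  -- φ facts
  have hφdiff : Differentiable ℝ φ := hφ.differentiable (by simp)
  have hφdc : Continuous (deriv φ) := hφ.continuous_deriv (by simp)
  have hφcs : HasCompactSupport φ :=
    isCompact_Icc.of_isClosed_subset (isClosed_tsupport φ) (hsupp.trans Ioo_subset_Icc_self)
  obtain ⟨L₀, hL₀⟩ := (hφcs.deriv).exists_bound_of_continuous hφdc
  set L : ℝ := max L₀ 0 with hLdef
  have hL0 : 0 ≤ L := le_max_right _ _
  have hLb : ∀ x, |deriv φ x| ≤ L := fun x => (hL₀ x).trans (le_max_left _ _)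
  have hφlip : ∀ u v : ℝ, |φ v - φ u| ≤ L * |v - u| := by
    intro u v
    have := Convex.norm_image_sub_le_of_norm_deriv_le (fun x _ => hφdiff x)
      (fun x _ => hLb x) convex_univ (mem_univ u) (mem_univ v)
    simpa [Real.norm_eq_abs] using this
  -- contact set
  set K := touchSet a b (primit a f) with hKdef
  have hKcl : IsClosed K := isClosed_touchSet hab.le hF
  have hbK : b ∈ K := right_mem_touchSet hab.le
  have hJKe : ∀ y ∈ K, J y = φ y := fun y hy => hJ.1 y hy.1 hy.2
  -- Lipschitz bound for the envelope and Tcv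
  have hglip : ∀ u ∈ Icc a b, ∀ v ∈ Icc a b,
      |convEnv a b (primit a f) v - convEnv a b (primit a f) u| ≤ M * |v - u| :=
    fun u hu v hv => convEnv_lipschitz hab.le hF hM0 hMlip hu hv
  have hTb : ∀ x ∈ Icc a b, |Tcv a b f x| ≤ M := fun x hx =>
    abs_derivWithin_le_of_lip hab hx hM0 hglip
  have hTeq : ∀ x ∈ Ioo a b, Tcv a b f x = deriv (convEnv a b (primit a f)) x :=
    fun x hx => derivWithin_of_mem_nhds (Icc_mem_nhds hx.1 hx.2)
  -- gaps
  have hgapAll : ∀ y : ℝ, y ∈ Ioo a b \ K → ∃ c d : ℝ, c ∈ K ∧ d ∈ K ∧ c < y ∧ y < d ∧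
      (∀ z ∈ Ioo c d, z ∉ K) := by
    intro y hy
    obtain ⟨c, d, h1, h2, h3, h4, h5, -, -⟩ := gap_spec hab.le hF hy.1 hy.2
    exact ⟨c, d, h1, h2, h3, h4, h5⟩
  choose! cf df hc1 hc2 hc3 hc4 hc5 using hgapAll
  -- J is affine on each gap
  have hJform : ∀ y ∈ Ioo a b \ K, ∀ x ∈ Ioo (cf y) (df y),
      J x = φ (cf y) + ((φ (df y) - φ (cf y)) / (df y - cf y)) * (x - cf y) := by
    intro y hy
    refine hJ.2 (cf y) (df y) (hc1 y hy).1.1 ((hc3 y hy).trans (hc4 y hy)) (hc2 y hy).1.2 ?_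
      (Or.inr (hc1 y hy).2) (Or.inr (hc2 y hy).2)
    intro z hz
    have hzIcc : z ∈ Icc a b := ⟨((hc1 y hy).1.1).trans hz.1.le, hz.2.le.trans (hc2 y hy).1.2⟩
    refine lt_of_le_of_ne (convEnv_le_self hab.le hF hzIcc) ?_
    intro heq
    exact (hc5 y hy z hz) ⟨hzIcc, heq.symm⟩
  have hJder : ∀ y ∈ Ioo a b \ K, ∀ z ∈ Ioo (cf y) (df y),
      deriv J z = (φ (df y) - φ (cf y)) / (df y - cf y) := by
    intro y hy z hz
    have hev : J =ᶠ[𝓝 z]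
        fun x => φ (cf y) + ((φ (df y) - φ (cf y)) / (df y - cf y)) * (x - cf y) := by
      filter_upwards [Ioo_mem_nhds hz.1 hz.2] with w hw
      exact hJform y hy w hw
    rw [hev.deriv_eq]
    have hda : HasDerivAt
        (fun x => φ (cf y) + ((φ (df y) - φ (cf y)) / (df y - cf y)) * (x - cf y))
        ((φ (df y) - φ (cf y)) / (df y - cf y)) z := by
      simpa using (((hasDerivAt_id z).sub_const (cf y)).const_mul
        ((φ (df y) - φ (cf y)) / (df y - cf y))).const_add (φ (cf y))
    exact hda.deriv
  have hslope : ∀ y ∈ Ioo a b \ K,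
      ((φ (df y) - φ (cf y)) / (df y - cf y)) * (df y - cf y) = φ (df y) - φ (cf y) :=
    fun y hy => div_mul_cancel₀ _ (sub_ne_zero.2 (ne_of_gt ((hc3 y hy).trans (hc4 y hy))))
  have hsb : ∀ y ∈ Ioo a b \ K, |(φ (df y) - φ (cf y)) / (df y - cf y)| ≤ L := by
    intro y hy
    have hcd : cf y < df y := (hc3 y hy).trans (hc4 y hy)
    rw [abs_div, div_le_iff₀ (abs_pos.2 (sub_ne_zero.2 (ne_of_gt hcd)))]
    exact hφlip (cf y) (df y)
  -- J - φ bounds on gaps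
  have hgapB : ∀ y ∈ Ioo a b, y ∉ K → ∃ c d : ℝ, c ∈ K ∧ d ∈ K ∧ c < y ∧ y < d ∧
      (∀ z ∈ Ioo c d, z ∉ K) ∧ |J y - φ y| ≤ (2*L) * (y - c) ∧
      |J y - φ y| ≤ (2*L) * (d - y) := by
    intro y hyI hyK
    have hy : y ∈ Ioo a b \ K := ⟨hyI, hyK⟩
    have hcd : cf y < df y := (hc3 y hy).trans (hc4 y hy)
    have hyg : y ∈ Ioo (cf y) (df y) := ⟨hc3 y hy, hc4 y hy⟩
    have hJy := hJform y hy y hyg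
    refine ⟨cf y, df y, hc1 y hy, hc2 y hy, hc3 y hy, hc4 y hy, hc5 y hy, ?_, ?_⟩
    · rw [hJy]
      have e0 : φ (cf y) + ((φ (df y) - φ (cf y)) / (df y - cf y)) * (y - cf y) - φ y
          = (φ (cf y) - φ y) + ((φ (df y) - φ (cf y)) / (df y - cf y)) * (y - cf y) := by
        ring
      rw [e0]
      refine (abs_add_le _ _).trans ?_
      have e2 : |φ (cf y) - φ y| ≤ L * (y - cf y) := by
        have h := hφlip y (cf y)
        have habs : |cf y - y| = y - cf y := by
          rw [abs_of_nonpos (by linarith [hc3 y hy] : cf y - y ≤ 0)]; ring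
        rwa [habs] at h
      have e3 : |((φ (df y) - φ (cf y)) / (df y - cf y)) * (y - cf y)| ≤ L * (y - cf y) := by
        rw [abs_mul, abs_of_nonneg (by linarith [hc3 y hy] : (0:ℝ) ≤ y - cf y)]
        exact mul_le_mul_of_nonneg_right (hsb y hy) (by linarith [hc3 y hy])
      linarith
    · have hrw : φ (cf y) + ((φ (df y) - φ (cf y)) / (df y - cf y)) * (y - cf y)
          = φ (df y) + ((φ (df y) - φ (cf y)) / (df y - cf y)) * (y - df y) := by
        linear_combination (hslope y hy)
      rw [hJy, hrw]
      have e0 : φ (df y) + ((φ (df y) - φ (cf y)) / (df y - cf y)) * (y - df y) - φ y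
          = (φ (df y) - φ y) + ((φ (df y) - φ (cf y)) / (df y - cf y)) * (y - df y) := by
        ring
      rw [e0]
      refine (abs_add_le _ _).trans ?_
      have e2 : |φ (df y) - φ y| ≤ L * (df y - y) := by
        have h := hφlip y (df y)
        have habs : |df y - y| = df y - y :=
          abs_of_nonneg (by linarith [hc4 y hy])
        rwa [habs] at h
      have e3 : |((φ (df y) - φ (cf y)) / (df y - cf y)) * (y - df y)| ≤ L * (df y - y) := by
        rw [abs_mul, abs_of_nonpos (by linarith [hc4 y hy] : y - df y ≤ 0), neg_sub]
        exact mul_le_mul_of_nonneg_right (hsb y hy) (by linarith [hc4 y hy])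
      linarith
  -- a.e. derivative equality on K
  have haeK := ae_deriv_eq_on_touch hKcl (by linarith : (0:ℝ) ≤ 2*L) hφdiff hJKe hgapB
  have haeb : ∀ᵐ x : ℝ, x ≠ b := by
    rw [ae_iff]
    simp only [not_not, setOf_eq_eq_singleton]
    exact measure_singleton b
  -- a.e. bounds
  have haeBound : ∀ᵐ x : ℝ, x ∈ Ioc a b → |Tcv a b f x * deriv J x| ≤ M * L := by
    filter_upwards [haeK, haeb] with x hx1 hx2 hxIoc
    have hxIoo : x ∈ Ioo a b := ⟨hxIoc.1, lt_of_le_of_ne hxIoc.2 hx2⟩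
    have hT := hTb x (Ioo_subset_Icc_self hxIoo)
    by_cases hxK : x ∈ K
    · rw [abs_mul, hx1 ⟨hxK, hxIoo⟩]
      exact mul_le_mul hT (hLb x) (abs_nonneg _) hM0
    · have hder := hJder x ⟨hxIoo, hxK⟩ x ⟨hc3 x ⟨hxIoo, hxK⟩, hc4 x ⟨hxIoo, hxK⟩⟩
      rw [abs_mul, hder]
      exact mul_le_mul hT (hsb x ⟨hxIoo, hxK⟩) (abs_nonneg _) hM0
  have haeBound2 : ∀ᵐ x : ℝ, x ∈ Ioc a b → |Tcv a b f x * deriv φ x| ≤ M * L := by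
    filter_upwards [haeb] with x hx2 hxIoc
    have hxIoo : x ∈ Ioo a b := ⟨hxIoc.1, lt_of_le_of_ne hxIoc.2 hx2⟩
    rw [abs_mul]
    exact mul_le_mul (hTb x (Ioo_subset_Icc_self hxIoo)) (hLb x) (abs_nonneg _) hM0
  -- measurability
  have hmeas1 : AEStronglyMeasurable (fun x => Tcv a b f x * deriv J x)
      (volume.restrict (Ioc a b)) := by
    have hQ : Measurable (fun x => deriv (convEnv a b (primit a f)) x * deriv J x) :=
      (measurable_deriv _).mul (measurable_deriv _)
    refine hQ.aestronglyMeasurable.congr ?_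
    refine (ae_restrict_iff' measurableSet_Ioc).2 ?_
    filter_upwards [haeb] with x hx2 hxIoc
    have hxIoo : x ∈ Ioo a b := ⟨hxIoc.1, lt_of_le_of_ne hxIoc.2 hx2⟩
    rw [hTeq x hxIoo]
  have hmeas2 : AEStronglyMeasurable (fun x => Tcv a b f x * deriv φ x)
      (volume.restrict (Ioc a b)) := by
    have hQ : Measurable (fun x => deriv (convEnv a b (primit a f)) x * deriv φ x) :=
      (measurable_deriv _).mul (measurable_deriv _)
    refine hQ.aestronglyMeasurable.congr ?_
    refine (ae_restrict_iff' measurableSet_Ioc).2 ?_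
    filter_upwards [haeb] with x hx2 hxIoc
    have hxIoo : x ∈ Ioo a b := ⟨hxIoc.1, lt_of_le_of_ne hxIoc.2 hx2⟩
    rw [hTeq x hxIoo]
  -- integrability
  have hintc : IntegrableOn (fun _ : ℝ => M * L) (Ioc a b) volume :=
    integrableOn_const (by rw [Real.volume_Ioc]; exact ENNReal.ofReal_ne_top)
  have hint1 : IntegrableOn (fun x => Tcv a b f x * deriv J x) (Ioc a b) volume := by
    refine Integrable.mono' hintc hmeas1 ?_
    refine (ae_restrict_iff' measurableSet_Ioc).2 ?_
    filter_upwards [haeBound] with x h hx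
    rw [Real.norm_eq_abs]
    exact h hx
  have hint2 : IntegrableOn (fun x => Tcv a b f x * deriv φ x) (Ioc a b) volume := by
    refine Integrable.mono' hintc hmeas2 ?_
    refine (ae_restrict_iff' measurableSet_Ioc).2 ?_
    filter_upwards [haeBound2] with x h hx
    rw [Real.norm_eq_abs]
    exact h hx
  -- rewrite as set integrals and split along K
  rw [intervalIntegral.integral_of_le hab.le, intervalIntegral.integral_of_le hab.le]
  rw [← integral_inter_add_diff hKcl.measurableSet hint1,
    ← integral_inter_add_diff hKcl.measurableSet hint2]
  have hIocK : Ioc a b \ K = Ioo a b \ K := by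
    ext z
    constructor
    · rintro ⟨hz1, hz2⟩
      exact ⟨⟨hz1.1, lt_of_le_of_ne hz1.2 (fun h => hz2 (h ▸ hbK))⟩, hz2⟩
    · rintro ⟨hz1, hz2⟩
      exact ⟨Ioo_subset_Ioc_self hz1, hz2⟩
  have hpart1 : ∫ x in Ioc a b ∩ K, Tcv a b f x * deriv J x
      = ∫ x in Ioc a b ∩ K, Tcv a b f x * deriv φ x := by
    apply setIntegral_congr_ae (measurableSet_Ioc.inter hKcl.measurableSet)
    filter_upwards [haeK, haeb] with x h1 h2 hx
    have hxIoo : x ∈ Ioo a b := ⟨hx.1.1, lt_of_le_of_ne hx.1.2 h2⟩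
    rw [h1 ⟨hx.2, hxIoo⟩]
  have hpart2 : ∫ x in Ioc a b \ K, Tcv a b f x * deriv J x
      = ∫ x in Ioc a b \ K, Tcv a b f x * deriv φ x := by
    rw [hIocK]
    set T : ℚ → Set ℝ := fun r => if ((r:ℝ) ∈ Ioo a b \ K) ∧
        (∀ r' : ℚ, (r':ℝ) ∈ Ioo (cf (r:ℝ)) (df (r:ℝ)) →
          Encodable.encode r ≤ Encodable.encode r')
      then Ioo (cf (r:ℝ)) (df (r:ℝ)) else ∅ with hTdef
    have hTsub : ∀ r : ℚ, T r ⊆ Ioo a b \ K := by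
      intro r z hz
      simp only [hTdef] at hz
      split_ifs at hz with h
      · obtain ⟨hrm, -⟩ := h
        refine ⟨⟨lt_of_le_of_lt (hc1 _ hrm).1.1 hz.1, lt_of_lt_of_le hz.2 (hc2 _ hrm).1.2⟩, ?_⟩
        exact hc5 _ hrm z hz
      · exact absurd hz (notMem_empty z)
    have hTunion : (⋃ r : ℚ, T r) = Ioo a b \ K := by
      apply Subset.antisymm
      · exact iUnion_subset hTsub
      · intro y hy
        have hcd : cf y < df y := (hc3 y hy).trans (hc4 y hy)
        have hex : ∃ n : ℕ, ∃ r : ℚ, Encodable.encode r = n ∧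
            (r:ℝ) ∈ Ioo (cf y) (df y) := by
          obtain ⟨r, hr1, hr2⟩ := exists_rat_btwn hcd
          exact ⟨Encodable.encode r, r, rfl, hr1, hr2⟩
        obtain ⟨r₀, hr₀e, hr₀m⟩ := Nat.find_spec hex
        have hr₀U : (r₀:ℝ) ∈ Ioo a b \ K := by
          refine ⟨⟨lt_of_le_of_lt (hc1 y hy).1.1 hr₀m.1,
            lt_of_lt_of_le hr₀m.2 (hc2 y hy).1.2⟩, hc5 y hy _ hr₀m⟩
        have hgeq := gap_unique (hc1 _ hr₀U) (hc2 _ hr₀U) (hc1 y hy) (hc2 y hy)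
          (hc5 _ hr₀U) (hc5 y hy) ⟨hc3 _ hr₀U, hc4 _ hr₀U⟩ hr₀m
        have hmin : ∀ r' : ℚ, (r':ℝ) ∈ Ioo (cf (r₀:ℝ)) (df (r₀:ℝ)) →
            Encodable.encode r₀ ≤ Encodable.encode r' := by
          intro r' hr'
          rw [hgeq.1, hgeq.2] at hr'
          rw [hr₀e]
          exact Nat.find_le ⟨r', rfl, hr'⟩
        rw [mem_iUnion]
        refine ⟨r₀, ?_⟩
        simp only [hTdef]
        rw [if_pos ⟨hr₀U, hmin⟩, hgeq.1, hgeq.2]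
        exact ⟨hc3 y hy, hc4 y hy⟩
    have hTdisj : Pairwise (Function.onFun Disjoint T) := by
      intro r r' hrr'
      refine Set.disjoint_left.2 fun {z} hz hz' => hrr' ?_
      simp only [hTdef] at hz hz'
      split_ifs at hz with h
      · split_ifs at hz' with h'
        · have hgeq := gap_unique (hc1 _ h.1) (hc2 _ h.1) (hc1 _ h'.1) (hc2 _ h'.1)
            (hc5 _ h.1) (hc5 _ h'.1) hz hz'
          have e1 : Encodable.encode r ≤ Encodable.encode r' := by
            refine h.2 r' ?_
            rw [hgeq.1, hgeq.2]
            exact ⟨hc3 _ h'.1, hc4 _ h'.1⟩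
          have e2 : Encodable.encode r' ≤ Encodable.encode r := by
            refine h'.2 r ?_
            rw [← hgeq.1, ← hgeq.2]
            exact ⟨hc3 _ h.1, hc4 _ h.1⟩
          exact Encodable.encode_injective (le_antisymm e1 e2)
        · exact absurd hz' (notMem_empty z)
      · exact absurd hz (notMem_empty z)
    have hTm : ∀ r : ℚ, MeasurableSet (T r) := by
      intro r
      simp only [hTdef]
      split_ifs
      · exact measurableSet_Ioo
      · exact MeasurableSet.empty
    have hsubIoc : (⋃ r : ℚ, T r) ⊆ Ioc a b := by
      rw [hTunion]
      exact fun z hz => Ioo_subset_Ioc_self hz.1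
    have hint1U : IntegrableOn (fun x => Tcv a b f x * deriv J x) (⋃ r : ℚ, T r) volume :=
      hint1.mono_set hsubIoc
    have hint2U : IntegrableOn (fun x => Tcv a b f x * deriv φ x) (⋃ r : ℚ, T r) volume :=
      hint2.mono_set hsubIoc
    rw [← hTunion, integral_iUnion hTm hTdisj hint1U, integral_iUnion hTm hTdisj hint2U]
    apply tsum_congr
    intro r
    simp only [hTdef]
    split_ifs with h
    · obtain ⟨hrm, -⟩ := h
      have hcd : cf (r:ℝ) < df (r:ℝ) := (hc3 _ hrm).trans (hc4 _ hrm)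
      have hubr : ∀ k ∈ K, k ≤ (r:ℝ) → k ≤ cf (r:ℝ) := by
        intro k hk hky
        by_contra hcon
        push_neg at hcon
        exact (hc5 _ hrm k ⟨hcon, lt_of_le_of_lt hky (hc4 _ hrm)⟩) hk
      have hlbr : ∀ k ∈ K, (r:ℝ) ≤ k → df (r:ℝ) ≤ k := by
        intro k hk hky
        by_contra hcon
        push_neg at hcon
        exact (hc5 _ hrm k ⟨lt_of_lt_of_le (hc3 _ hrm) hky, hcon⟩) hk
      obtain ⟨m, hm⟩ := gap_deriv_const (c := cf (r:ℝ)) (d := df (r:ℝ)) hab.le hF hrm.1 hrm.2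
        (hc3 _ hrm) (hc4 _ hrm) hubr hlbr
      exact gap_integral_eq hcd (fun z hz => hm z hz) (hJder _ hrm) (hslope _ hrm)
        hφdiff hφdc
    · simp
  rw [hpart1, hpart2]
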